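/- Let R ≠ 0 be a Jacobi-Tsankov algebraic curvature tensor with r(z) < m-1 for all z, and let x be a unit vector with r(x) ≠ 0. Then J(x) has exactly two eigenvalues: 0 and some λ ≠ 0, with J(x) = λ·id on Range(J(x)). -/

import Mathlib

open scoped InnerProductSpace
noncomputable section

variable {V : Type*} [NormedAddCommGroup V] [InnerProductSpace ℝ V]

/-- `R` satisfies the symmetries of an algebraic curvature tensor. -/
def IsCurvatureOperator (R : V →ₗ[ℝ] V →ₗ[ℝ] V →ₗ[ℝ] V) : Prop :=
  (∀ x y z w : V, ⟪R x y z, w⟫_ℝ = ⟪R z w x, y⟫_ℝ) ∧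
  (∀ x y z w : V, ⟪R x y z, w⟫_ℝ = - ⟪R y x z, w⟫_ℝ) ∧
  (∀ x y z w : V, ⟪R x y z, w⟫_ℝ + ⟪R y z x, w⟫_ℝ + ⟪R z x y, w⟫_ℝ = 0)

/-- The Jacobi operator `J(x) : y ↦ R(y,x)x`. -/
def Jacobi (R : V →ₗ[ℝ] V →ₗ[ℝ] V →ₗ[ℝ] V) (x : V) : V →ₗ[ℝ] V where
  toFun y := R y x x
  map_add' a b := by simp
  map_smul' c a := by simp

/-- The polarized Jacobi operator `J(x,y) : z ↦ ½R(z,x)y + ½R(z,y)x`. -/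
def JacobiP (R : V →ₗ[ℝ] V →ₗ[ℝ] V →ₗ[ℝ] V) (x y : V) : V →ₗ[ℝ] V where
  toFun z := (1/2 : ℝ) • R z x y + (1/2 : ℝ) • R z y x
  map_add' a b := by simp; module
  map_smul' c a := by simp; module

/-- `R` is Jacobi-Tsankov: Jacobi operators of orthogonal vectors commute. -/
def JacobiTsankov (R : V →ₗ[ℝ] V →ₗ[ℝ] V →ₗ[ℝ] V) : Prop :=
  ∀ x y : V, ⟪x, y⟫_ℝ = 0 → Jacobi R x ∘ₗ Jacobi R y = Jacobi R y ∘ₗ Jacobi R x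

namespace JTaux
section
variable (R : V →ₗ[ℝ] V →ₗ[ℝ] V →ₗ[ℝ] V)

@[simp] lemma jacobi_apply (x y : V) : Jacobi R x y = R y x x := rfl

@[simp] lemma jacobiP_apply (x y z : V) :
    JacobiP R x y z = (1/2 : ℝ) • R z x y + (1/2 : ℝ) • R z y x := rfl

lemma jacobiP_comm (u v : V) : JacobiP R u v = JacobiP R v u := by
  ext z; simp [add_comm]

lemma jacobiP_self (u : V) : JacobiP R u u = Jacobi R u := by
  ext z; simp; module

lemma jacobi_add (u v : V) :
    Jacobi R (u + v) = Jacobi R u + Jacobi R v + (2:ℝ) • JacobiP R u v := by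
  ext z; simp [map_add]; module

lemma jacobi_neg (u : V) : Jacobi R (-u) = Jacobi R u := by
  ext z; simp

lemma jacobiP_add_left (u u' v : V) :
    JacobiP R (u + u') v = JacobiP R u v + JacobiP R u' v := by
  ext z; simp [map_add]; module

lemma jacobiP_neg_left (u v : V) : JacobiP R (-u) v = - JacobiP R u v := by
  ext z; simp; module

lemma jacobiP_sub_left (u u' v : V) :
    JacobiP R (u - u') v = JacobiP R u v - JacobiP R u' v := by
  rw [sub_eq_add_neg, jacobiP_add_left, jacobiP_neg_left, sub_eq_add_neg]

lemma jacobi_sub (u v : V) :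
    Jacobi R (u - v) = Jacobi R u + Jacobi R v - (2:ℝ) • JacobiP R u v := by
  rw [sub_eq_add_neg, jacobi_add, jacobi_neg, jacobiP_comm, jacobiP_neg_left,
    jacobiP_comm, smul_neg, sub_eq_add_neg]


end

variable {R : V →ₗ[ℝ] V →ₗ[ℝ] V →ₗ[ℝ] V}

lemma pair (hR : IsCurvatureOperator R) (a b c d : V) :
    ⟪R a b c, d⟫_ℝ = ⟪R c d a, b⟫_ℝ := hR.1 a b c d

lemma a12 (hR : IsCurvatureOperator R) (a b c d : V) :
    ⟪R a b c, d⟫_ℝ = - ⟪R b a c, d⟫_ℝ := hR.2.1 a b c d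

lemma a34 (hR : IsCurvatureOperator R) (a b c d : V) :
    ⟪R a b c, d⟫_ℝ = - ⟪R a b d, c⟫_ℝ := by
  rw [pair hR, a12 hR, pair hR d c a b]

lemma bianchi (hR : IsCurvatureOperator R) (a b c d : V) :
    ⟪R a b c, d⟫_ℝ + ⟪R b c a, d⟫_ℝ + ⟪R c a b, d⟫_ℝ = 0 := hR.2.2 a b c d

lemma jacobi_symm (hR : IsCurvatureOperator R) (u v w : V) :
    ⟪Jacobi R u v, w⟫_ℝ = ⟪v, Jacobi R u w⟫_ℝ := by
  have h : ⟪R v u u, w⟫_ℝ = ⟪R w u u, v⟫_ℝ := by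
    rw [pair hR v u u w, a12 hR, a34 hR w u v u]; ring
  show ⟪R v u u, w⟫_ℝ = ⟪v, R w u u⟫_ℝ
  rw [h, real_inner_comm]

lemma jacobiP_symm (hR : IsCurvatureOperator R) (u v a b : V) :
    ⟪JacobiP R u v a, b⟫_ℝ = ⟪a, JacobiP R u v b⟫_ℝ := by
  rw [show ⟪a, JacobiP R u v b⟫_ℝ = ⟪JacobiP R u v b, a⟫_ℝ from real_inner_comm _ _]
  show ⟪(1/2 : ℝ) • R a u v + (1/2 : ℝ) • R a v u, b⟫_ℝ
     = ⟪(1/2 : ℝ) • R b u v + (1/2 : ℝ) • R b v u, a⟫_ℝ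
  rw [inner_add_left, inner_add_left, real_inner_smul_left, real_inner_smul_left,
    real_inner_smul_left, real_inner_smul_left]
  have h1 : ⟪R a u v, b⟫_ℝ = ⟪R b v u, a⟫_ℝ := by
    rw [pair hR a u v b, a12 hR, a34 hR b v a u]; ring
  have h2 : ⟪R a v u, b⟫_ℝ = ⟪R b u v, a⟫_ℝ := by
    rw [pair hR a v u b, a12 hR, a34 hR b u a v]; ring
  rw [h1, h2]; ring

lemma jacobi_self (hR : IsCurvatureOperator R) (x : V) : Jacobi R x x = 0 := by
  have h : ∀ w, ⟪Jacobi R x x, w⟫_ℝ = 0 := by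
    intro w
    have := a12 hR x x x w
    show ⟪R x x x, w⟫_ℝ = 0
    linarith
  exact ext_inner_right ℝ (by simpa using h)

/-- decomposition helper: if `w` is orthogonal to everything orthogonal to unit `x`,
then `w` is a multiple of `x`. -/
lemma span_of {x : V} (hx : ‖x‖ = 1) {w : V}
    (h : ∀ v, ⟪x, v⟫_ℝ = 0 → ⟪w, v⟫_ℝ = 0) : w = ⟪w, x⟫_ℝ • x := by
  have hxx : ⟪x, x⟫_ℝ = 1 := by
    rw [real_inner_self_eq_norm_sq, hx]; norm_num
  set v := w - ⟪w, x⟫_ℝ • x with hv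
  have hxv : ⟪x, v⟫_ℝ = 0 := by
    rw [hv, inner_sub_right, real_inner_smul_right, hxx, real_inner_comm]; ring
  have hwv : ⟪w, v⟫_ℝ = 0 := h v hxv
  have hvv : ⟪v, v⟫_ℝ = 0 := by
    have h1 : ⟪w - ⟪w, x⟫_ℝ • x, v⟫_ℝ = 0 := by
      rw [inner_sub_left, real_inner_smul_left, hxv, hwv]; ring
    rwa [← hv] at h1
  have hv0 : v = 0 := inner_self_eq_zero (𝕜 := ℝ).mp hvv
  rw [hv] at hv0
  exact sub_eq_zero.mp hv0




variable {R : V →ₗ[ℝ] V →ₗ[ℝ] V →ₗ[ℝ] V}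

lemma tmul (hT : JacobiTsankov R) {u v : V} (h : ⟪u, v⟫_ℝ = 0) :
    Jacobi R u * Jacobi R v = Jacobi R v * Jacobi R u := by
  have := hT u v h
  rwa [← Module.End.mul_eq_comp, ← Module.End.mul_eq_comp] at this

lemma star_aux {P G K : V →ₗ[ℝ] V} (h1 : P * (G + (2:ℝ) • K) = (G + (2:ℝ) • K) * P)
    (h2 : P * (G - (2:ℝ) • K) = (G - (2:ℝ) • K) * P) : P * K = K * P := by
  have hz : P * ((G + (2:ℝ) • K) - (G - (2:ℝ) • K))
      = ((G + (2:ℝ) • K) - (G - (2:ℝ) • K)) * P := by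
    rw [mul_sub, sub_mul, h1, h2]
  have hd : (G + (2:ℝ) • K) - (G - (2:ℝ) • K) = (4:ℝ) • K := by module
  rw [hd, mul_smul_comm, smul_mul_assoc] at hz
  have h4 := congrArg (fun Z => (4⁻¹ : ℝ) • Z) hz
  simpa [smul_smul] using h4

lemma rot_cancel {S D : V →ₗ[ℝ] V}
    (h : (S + (2:ℝ) • D) * (S - (2:ℝ) • D) = (S - (2:ℝ) • D) * (S + (2:ℝ) • D)) :
    S * D = D * S := by
  have hz : ((S + (2:ℝ) • D) * (S - (2:ℝ) • D)) - ((S - (2:ℝ) • D) * (S + (2:ℝ) • D))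
      = (4:ℝ) • (D * S) - (4:ℝ) • (S * D) := by
    simp only [mul_sub, sub_mul, add_mul, mul_add, smul_mul_assoc, mul_smul_comm, smul_smul]
    module
  rw [h, sub_self] at hz
  have h4 : (4:ℝ) • (D * S) = (4:ℝ) • (S * D) := sub_eq_zero.mp hz.symm
  have := congrArg (fun Z => (4⁻¹ : ℝ) • Z) h4
  simpa [smul_smul] using this.symm

/-- (T3) : `J(u)` commutes with `J(v,w)` when `u ⊥ v` and `u ⊥ w`. -/
lemma t3 (hT : JacobiTsankov R) {u v w : V} (huv : ⟪u, v⟫_ℝ = 0) (huw : ⟪u, w⟫_ℝ = 0) :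
    Jacobi R u * JacobiP R v w = JacobiP R v w * Jacobi R u := by
  have h1 := tmul hT (v := v + w) (by rw [inner_add_right, huv, huw]; ring)
  have h2 := tmul hT (v := v - w) (by rw [inner_sub_right, huv, huw]; ring)
  rw [jacobi_add] at h1
  rw [jacobi_sub] at h2
  exact star_aux h1 h2

/-- (T2) : `J(x)+J(e)` commutes with `J(x,e)` for orthonormal `x, e`. -/
lemma t2 (hT : JacobiTsankov R) {x e : V} (hx : ‖x‖ = 1) (he : ‖e‖ = 1)
    (hxe : ⟪x, e⟫_ℝ = 0) :
    (Jacobi R x + Jacobi R e) * JacobiP R x e = JacobiP R x e * (Jacobi R x + Jacobi R e) := by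
  have hxx : ⟪x, x⟫_ℝ = 1 := by rw [real_inner_self_eq_norm_sq, hx]; norm_num
  have hee : ⟪e, e⟫_ℝ = 1 := by rw [real_inner_self_eq_norm_sq, he]; norm_num
  have hex : ⟪e, x⟫_ℝ = 0 := by rw [real_inner_comm]; exact hxe
  have horth : ⟪x + e, x - e⟫_ℝ = 0 := by
    rw [inner_add_left, inner_sub_right, inner_sub_right, hxx, hee, hxe, hex]; ring
  have h := tmul hT horth
  rw [jacobi_add, jacobi_sub] at h
  exact rot_cancel h



section Mid
variable {R : V →ₗ[ℝ] V →ₗ[ℝ] V →ₗ[ℝ] V}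

/-- eigenvectors of `J(x)` for distinct eigenvalues are orthogonal. -/
lemma eig_orth (hR : IsCurvatureOperator R) {x a b : V} {s t : ℝ}
    (ha : Jacobi R x a = s • a) (hb : Jacobi R x b = t • b) (hne : s ≠ t) :
    ⟪a, b⟫_ℝ = 0 := by
  have h1 : s * ⟪a, b⟫_ℝ = t * ⟪a, b⟫_ℝ := by
    have h2 : ⟪Jacobi R x a, b⟫_ℝ = ⟪a, Jacobi R x b⟫_ℝ := jacobi_symm hR x a b
    rw [ha, hb, real_inner_smul_left, real_inner_smul_right] at h2
    exact h2
  have := sub_eq_zero.mpr h1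
  rw [← sub_mul] at this
  rcases mul_eq_zero.mp this with h | h
  · exact absurd (sub_eq_zero.mp h) hne
  · exact h

lemma jp_cross (hR : IsCurvatureOperator R) (hT : JacobiTsankov R) {x u v a b : V} {s t : ℝ}
    (hxu : ⟪x, u⟫_ℝ = 0) (hxv : ⟪x, v⟫_ℝ = 0)
    (ha : Jacobi R x a = s • a) (hb : Jacobi R x b = t • b) (hne : s ≠ t) :
    ⟪JacobiP R u v a, b⟫_ℝ = 0 := by
  have h3 := t3 hT hxu hxv
  have hc := DFunLike.congr_fun h3 a
  simp only [Module.End.mul_apply] at hc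
  -- hc : Jacobi R x (JacobiP R u v a) = JacobiP R u v (Jacobi R x a)
  rw [ha, map_smul] at hc
  have h1 : s * ⟪JacobiP R u v a, b⟫_ℝ = t * ⟪JacobiP R u v a, b⟫_ℝ := by
    have h2 : ⟪Jacobi R x (JacobiP R u v a), b⟫_ℝ = ⟪JacobiP R u v a, Jacobi R x b⟫_ℝ :=
      jacobi_symm hR x _ b
    rw [hc, hb, real_inner_smul_left, real_inner_smul_right] at h2
    exact h2
  have := sub_eq_zero.mpr h1
  rw [← sub_mul] at this
  rcases mul_eq_zero.mp this with h | h
  · exact absurd (sub_eq_zero.mp h) hne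
  · exact h

lemma jab_span (hR : IsCurvatureOperator R) (hT : JacobiTsankov R) {x a b : V} {s t : ℝ}
    (hx : ‖x‖ = 1) (hxa : ⟪x, a⟫_ℝ = 0)
    (ha : Jacobi R x a = s • a) (hb : Jacobi R x b = t • b) (hne : s ≠ t) :
    Jacobi R a b = ⟪Jacobi R a b, x⟫_ℝ • x := by
  apply span_of hx
  intro v hv
  show ⟪R b a a, v⟫_ℝ = 0
  have s1 : ⟪R b a a, v⟫_ℝ = ⟪R a v b, a⟫_ℝ := pair hR b a a v
  have s2 : ⟪R a v b, a⟫_ℝ = - ⟪R a v a, b⟫_ℝ := a34 hR a v b a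
  have s4 : ⟪R a a v, b⟫_ℝ = 0 := by
    have := a12 hR a a v b; linarith
  have s5 : ⟪JacobiP R v a a, b⟫_ℝ = 0 := jp_cross hR hT hv hxa ha hb hne
  have s3 : ⟪JacobiP R v a a, b⟫_ℝ
      = (1/2) * ⟪R a v a, b⟫_ℝ + (1/2) * ⟪R a a v, b⟫_ℝ := by
    simp [jacobiP_apply, inner_add_left, real_inner_smul_left]
  rw [s1, s2]
  linarith

lemma jax_ker (hR : IsCurvatureOperator R) (hT : JacobiTsankov R) {x a : V}
    (hxa : ⟪x, a⟫_ℝ = 0) : Jacobi R x (Jacobi R a x) = 0 := by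
  have h := tmul hT hxa
  have hc := DFunLike.congr_fun h x
  simp only [Module.End.mul_apply] at hc
  rw [jacobi_self hR, map_zero] at hc
  exact hc

lemma jab_zero (hR : IsCurvatureOperator R) (hT : JacobiTsankov R) {x a b : V} {s t : ℝ}
    (hx : ‖x‖ = 1) (hxa : ⟪x, a⟫_ℝ = 0)
    (ha : Jacobi R x a = s • a) (hb : Jacobi R x b = t • b) (hne : s ≠ t) (ht : t ≠ 0) :
    Jacobi R a b = 0 := by
  rw [jab_span hR hT hx hxa ha hb hne]
  have hz : ⟪Jacobi R a b, x⟫_ℝ = 0 := by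
    rw [jacobi_symm hR]
    exact eig_orth hR hb (by rw [jax_ker hR hT hxa, zero_smul]) ht
  rw [hz, zero_smul]

lemma f1 (hR : IsCurvatureOperator R) (hT : JacobiTsankov R) {x g h b : V} {t : ℝ}
    (hxg : ⟪x, g⟫_ℝ = 0) (hxh : ⟪x, h⟫_ℝ = 0)
    (hb : Jacobi R x b = t • b) (ht : t ≠ 0) :
    ⟪R x g h, b⟫_ℝ + ⟪R x h g, b⟫_ℝ = 0 := by
  have hker : Jacobi R x (JacobiP R g h x) = 0 := by
    have h3 := t3 hT hxg hxh
    have hc := DFunLike.congr_fun h3 x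
    simp only [Module.End.mul_apply] at hc
    rw [jacobi_self hR, map_zero] at hc
    exact hc
  have h0 : ⟪JacobiP R g h x, b⟫_ℝ = 0 := by
    rw [real_inner_comm]
    exact eig_orth hR hb (by rw [hker, zero_smul]) ht
  have hexp : ⟪JacobiP R g h x, b⟫_ℝ
      = (1/2) * ⟪R x g h, b⟫_ℝ + (1/2) * ⟪R x h g, b⟫_ℝ := by
    simp [jacobiP_apply, inner_add_left, real_inner_smul_left]
  rw [hexp] at h0
  linarith

lemma dx_eq (hR : IsCurvatureOperator R) {x e : V} {l : ℝ}
    (hAe : Jacobi R x e = l • e) : JacobiP R x e x = (-(l/2)) • e := by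
  apply ext_inner_right ℝ
  intro w
  rw [jacobiP_apply, inner_add_left, real_inner_smul_left, real_inner_smul_left,
    real_inner_smul_left]
  have h1 : ⟪R x x e, w⟫_ℝ = 0 := by have := a12 hR x x e w; linarith
  have h2 : ⟪R x e x, w⟫_ℝ = -(l * ⟪e, w⟫_ℝ) := by
    have ha : ⟪R x e x, w⟫_ℝ = - ⟪R e x x, w⟫_ℝ := a12 hR x e x w
    have hb : ⟪R e x x, w⟫_ℝ = l * ⟪e, w⟫_ℝ := by
      show ⟪Jacobi R x e, w⟫_ℝ = _
      rw [hAe, real_inner_smul_left]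
    rw [ha, hb]
  rw [h1, h2]; ring

lemma star1 (hT : JacobiTsankov R) {x e f : V}
    (hxx : ⟪x, x⟫_ℝ = 1) (hff : ⟪f, f⟫_ℝ = 1)
    (hxe : ⟪x, e⟫_ℝ = 0) (hxf : ⟪x, f⟫_ℝ = 0) (hef : ⟪e, f⟫_ℝ = 0) :
    (Jacobi R x + Jacobi R f + (2:ℝ) • JacobiP R x f) * (JacobiP R x e - JacobiP R f e)
      = (JacobiP R x e - JacobiP R f e)
        * (Jacobi R x + Jacobi R f + (2:ℝ) • JacobiP R x f) := by
  have hfx : ⟪f, x⟫_ℝ = 0 := by rw [real_inner_comm]; exact hxf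
  have hfe : ⟪f, e⟫_ℝ = 0 := by rw [real_inner_comm]; exact hef
  have horth1 : ⟪x + f, x - f + e⟫_ℝ = 0 := by
    rw [inner_add_left, inner_add_right, inner_add_right, inner_sub_right, inner_sub_right,
      hxx, hff, hxe, hxf, hfx, hfe]; ring
  have horth2 : ⟪x + f, x - f - e⟫_ℝ = 0 := by
    rw [inner_add_left, inner_sub_right, inner_sub_right, inner_sub_right, inner_sub_right,
      hxx, hff, hxe, hxf, hfx, hfe]; ring
  have h1 := tmul hT horth1
  have h2 := tmul hT horth2
  rw [jacobi_add R (x - f) e] at h1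
  rw [jacobi_sub R (x - f) e] at h2
  have h3 := star_aux h1 h2
  rwa [jacobi_add R x f, jacobiP_sub_left R x f e] at h3

lemma star2 (hT : JacobiTsankov R) {x e f : V}
    (hxx : ⟪x, x⟫_ℝ = 1) (hff : ⟪f, f⟫_ℝ = 1)
    (hxe : ⟪x, e⟫_ℝ = 0) (hxf : ⟪x, f⟫_ℝ = 0) (hef : ⟪e, f⟫_ℝ = 0) :
    (Jacobi R x + Jacobi R f - (2:ℝ) • JacobiP R x f) * (JacobiP R x e + JacobiP R f e)
      = (JacobiP R x e + JacobiP R f e)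
        * (Jacobi R x + Jacobi R f - (2:ℝ) • JacobiP R x f) := by
  have hfx : ⟪f, x⟫_ℝ = 0 := by rw [real_inner_comm]; exact hxf
  have hfe : ⟪f, e⟫_ℝ = 0 := by rw [real_inner_comm]; exact hef
  have horth1 : ⟪x - f, x + f + e⟫_ℝ = 0 := by
    rw [inner_sub_left, inner_add_right, inner_add_right, inner_add_right, inner_add_right,
      hxx, hff, hxe, hxf, hfx, hfe]; ring
  have horth2 : ⟪x - f, x + f - e⟫_ℝ = 0 := by
    rw [inner_sub_left, inner_sub_right, inner_sub_right, inner_add_right, inner_add_right,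
      hxx, hff, hxe, hxf, hfx, hfe]; ring
  have h1 := tmul hT horth1
  have h2 := tmul hT horth2
  rw [jacobi_add R (x + f) e] at h1
  rw [jacobi_sub R (x + f) e] at h2
  have h3 := star_aux h1 h2
  rwa [jacobi_sub R x f, jacobiP_add_left R x f e] at h3

lemma alpha_zero (hR : IsCurvatureOperator R) (hT : JacobiTsankov R) {x e f y : V} {l m : ℝ}
    (hx : ‖x‖ = 1) (he : ‖e‖ = 1)
    (hxe : ⟪x, e⟫_ℝ = 0) (hxf : ⟪x, f⟫_ℝ = 0) (hef : ⟪e, f⟫_ℝ = 0)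
    (hAe : Jacobi R x e = l • e) (hAf : Jacobi R x f = m • f)
    (hl : l ≠ 0) (hm : m ≠ 0) (hlm : l ≠ m)
    (hy0 : Jacobi R x y = 0) (hxy : ⟪x, y⟫_ℝ = 0) :
    ⟪R x e y, f⟫_ℝ = 0 := by
  have hDfx : ⟪JacobiP R x e f, x⟫_ℝ = 0 := by
    rw [jacobiP_apply, inner_add_left, real_inner_smul_left, real_inner_smul_left]
    have h1 : ⟪R f e x, x⟫_ℝ = 0 := by have := a34 hR f e x x; linarith
    have h2 : ⟪R f x e, x⟫_ℝ = 0 := by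
      have p1 : ⟪R f x e, x⟫_ℝ = ⟪R e x f, x⟫_ℝ := pair hR f x e x
      have p2 : ⟪R e x f, x⟫_ℝ = - ⟪R e x x, f⟫_ℝ := a34 hR e x f x
      have p3 : ⟪R e x x, f⟫_ℝ = l * ⟪e, f⟫_ℝ := by
        show ⟪Jacobi R x e, f⟫_ℝ = _
        rw [hAe, real_inner_smul_left]
      rw [p1, p2, p3, hef]; ring
    rw [h1, h2]; ring
  have hJey : Jacobi R e y = ⟪Jacobi R e y, x⟫_ℝ • x :=
    jab_span hR hT hx hxe hAe (by rw [hy0, zero_smul]) hl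
  have hJef : Jacobi R e f = 0 := jab_zero hR hT hx hxe hAe hAf hlm hm
  have hT2 := t2 hT hx he hxe
  have hc := DFunLike.congr_fun hT2 f
  simp only [Module.End.mul_apply, LinearMap.add_apply] at hc
  rw [hAf, hJef, add_zero, map_smul] at hc
  have hinner := congrArg (fun z => ⟪z, y⟫_ℝ) hc
  simp only [inner_add_left, real_inner_smul_left] at hinner
  have q1 : ⟪Jacobi R x (JacobiP R x e f), y⟫_ℝ = 0 := by
    rw [jacobi_symm hR, hy0, inner_zero_right]
  have q2 : ⟪Jacobi R e (JacobiP R x e f), y⟫_ℝ = 0 := by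
    rw [jacobi_symm hR, hJey, real_inner_smul_right, hDfx]; ring
  rw [q1, q2] at hinner
  have hDfy : ⟪JacobiP R x e f, y⟫_ℝ = 0 := by
    have := hinner.symm
    rcases mul_eq_zero.mp (by linarith : m * ⟪JacobiP R x e f, y⟫_ℝ = 0) with h | h
    · exact absurd h hm
    · exact h
  have hpure : ⟪JacobiP R x e f, y⟫_ℝ
      = (1/2) * ⟪R x e y, f⟫_ℝ - ⟪R x y e, f⟫_ℝ := by
    rw [jacobiP_apply, inner_add_left, real_inner_smul_left, real_inner_smul_left]
    have hT1 : ⟪R f x e, y⟫_ℝ = ⟪R x e y, f⟫_ℝ - ⟪R x y e, f⟫_ℝ := by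
      have p1 : ⟪R f x e, y⟫_ℝ = ⟪R e y f, x⟫_ℝ := pair hR f x e y
      have p2 : ⟪R e y f, x⟫_ℝ = - ⟪R e y x, f⟫_ℝ := a34 hR e y f x
      have pb := bianchi hR x e y f
      have p3 : ⟪R y x e, f⟫_ℝ = - ⟪R x y e, f⟫_ℝ := a12 hR y x e f
      rw [p1, p2]; linarith
    have hT2' : ⟪R f e x, y⟫_ℝ = - ⟪R x y e, f⟫_ℝ := by
      have p1 : ⟪R f e x, y⟫_ℝ = ⟪R x y f, e⟫_ℝ := pair hR f e x y
      have p2 : ⟪R x y f, e⟫_ℝ = - ⟪R x y e, f⟫_ℝ := a34 hR x y f e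
      rw [p1, p2]
    rw [hT1, hT2']; ring
  have hf1 := f1 hR hT hxy hxe hAf hm
  rw [hpure] at hDfy
  linarith

lemma cx_zero (hR : IsCurvatureOperator R) (hT : JacobiTsankov R) {x e f : V} {l m : ℝ}
    (hx : ‖x‖ = 1) (he : ‖e‖ = 1) (hf : ‖f‖ = 1)
    (hxe : ⟪x, e⟫_ℝ = 0) (hxf : ⟪x, f⟫_ℝ = 0) (hef : ⟪e, f⟫_ℝ = 0)
    (hAe : Jacobi R x e = l • e) (hAf : Jacobi R x f = m • f)
    (hl : l ≠ 0) (hm : m ≠ 0) (hlm : l ≠ m) :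
    JacobiP R e f x = 0 := by
  have hfe : ⟪f, e⟫_ℝ = 0 := by rw [real_inner_comm]; exact hef
  have hker : Jacobi R x (JacobiP R e f x) = 0 := by
    have h3 := t3 hT hxe hxf
    have hc := DFunLike.congr_fun h3 x
    simp only [Module.End.mul_apply] at hc
    rw [jacobi_self hR, map_zero] at hc
    exact hc
  have hCxx : ⟪x, JacobiP R e f x⟫_ℝ = 0 := by
    rw [real_inner_comm, jacobiP_apply, inner_add_left, real_inner_smul_left,
      real_inner_smul_left]
    have p1 : ⟪R x e f, x⟫_ℝ = m * ⟪f, e⟫_ℝ := by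
      have q1 : ⟪R x e f, x⟫_ℝ = ⟪R f x x, e⟫_ℝ := pair hR x e f x
      have q2 : ⟪R f x x, e⟫_ℝ = m * ⟪f, e⟫_ℝ := by
        show ⟪Jacobi R x f, e⟫_ℝ = _
        rw [hAf, real_inner_smul_left]
      rw [q1, q2]
    have p2 : ⟪R x f e, x⟫_ℝ = l * ⟪e, f⟫_ℝ := by
      have q1 : ⟪R x f e, x⟫_ℝ = ⟪R e x x, f⟫_ℝ := pair hR x f e x
      have q2 : ⟪R e x x, f⟫_ℝ = l * ⟪e, f⟫_ℝ := by
        show ⟪Jacobi R x e, f⟫_ℝ = _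
        rw [hAe, real_inner_smul_left]
      rw [q1, q2]
    rw [p1, p2, hef, hfe]; ring
  have ha := alpha_zero hR hT hx he hxe hxf hef hAe hAf hl hm hlm hker hCxx
  have hfe' : ⟪f, e⟫_ℝ = 0 := hfe
  have ha' := alpha_zero hR hT hx hf hxf hxe hfe' hAf hAe hm hl (Ne.symm hlm) hker hCxx
  have k1 : ⟪R x e f, JacobiP R e f x⟫_ℝ = 0 := by
    have q1 : ⟪R x e f, JacobiP R e f x⟫_ℝ = ⟪R f (JacobiP R e f x) x, e⟫_ℝ :=
      pair hR x e f (JacobiP R e f x)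
    have q2 : ⟪R f (JacobiP R e f x) x, e⟫_ℝ = - ⟪R (JacobiP R e f x) f x, e⟫_ℝ :=
      a12 hR f (JacobiP R e f x) x e
    have q3 : ⟪R (JacobiP R e f x) f x, e⟫_ℝ = ⟪R x e (JacobiP R e f x), f⟫_ℝ :=
      pair hR (JacobiP R e f x) f x e
    rw [q1, q2, q3, ha]; ring
  have k2 : ⟪R x f e, JacobiP R e f x⟫_ℝ = 0 := by
    have q1 : ⟪R x f e, JacobiP R e f x⟫_ℝ = ⟪R e (JacobiP R e f x) x, f⟫_ℝ :=
      pair hR x f e (JacobiP R e f x)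
    have q2 : ⟪R e (JacobiP R e f x) x, f⟫_ℝ = - ⟪R (JacobiP R e f x) e x, f⟫_ℝ :=
      a12 hR e (JacobiP R e f x) x f
    have q3 : ⟪R (JacobiP R e f x) e x, f⟫_ℝ = ⟪R x f (JacobiP R e f x), e⟫_ℝ :=
      pair hR (JacobiP R e f x) e x f
    rw [q1, q2, q3, ha']; ring
  have expand : ∀ z : V, ⟪JacobiP R e f x, z⟫_ℝ
      = (1/2) * ⟪R x e f, z⟫_ℝ + (1/2) * ⟪R x f e, z⟫_ℝ := by
    intro z
    rw [jacobiP_apply, inner_add_left, real_inner_smul_left, real_inner_smul_left]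
  have hyy : ⟪JacobiP R e f x, JacobiP R e f x⟫_ℝ = 0 := by
    rw [expand, k1, k2]; ring
  exact inner_self_eq_zero.mp hyy

lemma half_key (hR : IsCurvatureOperator R) (hT : JacobiTsankov R) {x e f : V} {l m : ℝ}
    (hx : ‖x‖ = 1) (he : ‖e‖ = 1) (hf : ‖f‖ = 1)
    (hxe : ⟪x, e⟫_ℝ = 0) (hxf : ⟪x, f⟫_ℝ = 0) (hef : ⟪e, f⟫_ℝ = 0)
    (hAe : Jacobi R x e = l • e) (hAf : Jacobi R x f = m • f)
    (hl : l ≠ 0) (hm : m ≠ 0) (hlm : l ≠ m) :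
    -(l^2) = 2 * m * ⟪JacobiP R e f f, e⟫_ℝ := by
  have hxx : ⟪x, x⟫_ℝ = 1 := by rw [real_inner_self_eq_norm_sq, hx]; norm_num
  have hee : ⟪e, e⟫_ℝ = 1 := by rw [real_inner_self_eq_norm_sq, he]; norm_num
  have hff : ⟪f, f⟫_ℝ = 1 := by rw [real_inner_self_eq_norm_sq, hf]; norm_num
  have hfx : ⟪f, x⟫_ℝ = 0 := by rw [real_inner_comm]; exact hxf
  have hfe : ⟪f, e⟫_ℝ = 0 := by rw [real_inner_comm]; exact hef
  have hAx : Jacobi R x x = 0 := jacobi_self hR x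
  have hDx : JacobiP R x e x = (-(l/2)) • e := dx_eq hR hAe
  have hEx : JacobiP R x f x = (-(m/2)) • f := dx_eq hR hAf
  have hCx : JacobiP R e f x = 0 := cx_zero hR hT hx he hf hxe hxf hef hAe hAf hl hm hlm
  have hFe : Jacobi R f e = 0 := jab_zero hR hT hx hxf hAf hAe (Ne.symm hlm) hl
  have hDFx : JacobiP R x e (Jacobi R f x) = 0 := by
    have h3 := t3 hT hfx hfe
    have hc := DFunLike.congr_fun h3 x
    simp only [Module.End.mul_apply] at hc
    rw [hDx, map_smul, hFe, smul_zero] at hc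
    exact hc.symm
  have hs1 := star1 hT hxx hff hxe hxf hef
  have hs2 := star2 hT hxx hff hxe hxf hef
  have e1 := DFunLike.congr_fun hs1 x
  have e2 := DFunLike.congr_fun hs2 x
  simp only [Module.End.mul_apply, LinearMap.sub_apply, LinearMap.add_apply,
    LinearMap.smul_apply, hDx, hCx, hAx, hEx, sub_zero, zero_add, map_add, map_sub,
    map_smul, map_zero, smul_zero, hFe, hAe, hDFx, add_zero, zero_sub, smul_smul,
    jacobiP_comm R f e] at e1 e2
  have s1 := congrArg (fun z => ⟪z, e⟫_ℝ) e1
  have s2 := congrArg (fun z => ⟪z, e⟫_ℝ) e2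
  simp only [inner_add_left, inner_sub_left, inner_neg_left, real_inner_smul_left,
    inner_zero_left, hee] at s1 s2
  linear_combination s1 + s2

lemma nonzero_eig_unique (hR : IsCurvatureOperator R) (hT : JacobiTsankov R) {x e f : V}
    {l m : ℝ} (hx : ‖x‖ = 1) (he : ‖e‖ = 1) (hf : ‖f‖ = 1)
    (hAe : Jacobi R x e = l • e) (hAf : Jacobi R x f = m • f)
    (hl : l ≠ 0) (hm : m ≠ 0) : l = m := by
  by_contra hlm
  have hAx : Jacobi R x x = (0:ℝ) • x := by rw [jacobi_self hR, zero_smul]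
  have hxe : ⟪x, e⟫_ℝ = 0 := by
    rw [real_inner_comm]; exact eig_orth hR hAe hAx hl
  have hxf : ⟪x, f⟫_ℝ = 0 := by
    rw [real_inner_comm]; exact eig_orth hR hAf hAx hm
  have hef : ⟪e, f⟫_ℝ = 0 := eig_orth hR hAe hAf hlm
  have hfe : ⟪f, e⟫_ℝ = 0 := by rw [real_inner_comm]; exact hef
  have g1 := half_key hR hT hx he hf hxe hxf hef hAe hAf hl hm hlm
  have g2 := half_key hR hT hx hf he hxf hxe hfe hAf hAe hm hl (Ne.symm hlm)
  have hγ : ⟪JacobiP R f e e, f⟫_ℝ = ⟪JacobiP R e f f, e⟫_ℝ := by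
    rw [jacobiP_comm R f e, jacobiP_symm hR e f e f]
    exact real_inner_comm _ _
  rw [hγ] at g2
  have h3 : l^3 = m^3 := by linear_combination m * g2 - l * g1
  have hfac : (l - m) * (l^2 + l*m + m^2) = 0 := by linear_combination h3
  rcases mul_eq_zero.mp hfac with h | h
  · exact hlm (sub_eq_zero.mp h)
  · have hl2 : 0 < l^2 := by positivity
    nlinarith [sq_nonneg (l + m), sq_nonneg m]

end Mid
end JTaux

open JTaux

theorem stmt16 [FiniteDimensional ℝ V] (hm : 3 ≤ Module.finrank ℝ V)
    (R : V →ₗ[ℝ] V →ₗ[ℝ] V →ₗ[ℝ] V) (hR : IsCurvatureOperator R)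
    (hT : JacobiTsankov R) (hne : R ≠ 0)
    (hsmall : ∀ z : V, Module.finrank ℝ (LinearMap.range (Jacobi R z)) <
      Module.finrank ℝ V - 1)
    (x : V) (hx : ‖x‖ = 1)
    (hr : Module.finrank ℝ (LinearMap.range (Jacobi R x)) ≠ 0) :
    ∃ lam : ℝ, lam ≠ 0 ∧
      (∀ v ∈ LinearMap.range (Jacobi R x), Jacobi R x v = lam • v) ∧
      Module.End.HasEigenvalue (Jacobi R x) 0 ∧
      Module.End.HasEigenvalue (Jacobi R x) lam ∧
      ∀ μ : ℝ, Module.End.HasEigenvalue (Jacobi R x) μ → μ = 0 ∨ μ = lam := by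
  classical
  have hsymm : (Jacobi R x).IsSymmetric := fun a b => jacobi_symm hR x a b
  have hx0 : x ≠ 0 := by
    intro h; rw [h, norm_zero] at hx; norm_num at hx
  have hAx : Jacobi R x x = 0 := jacobi_self hR x
  have h0ev : Module.End.HasEigenvalue (Jacobi R x) 0 :=
    Module.End.hasEigenvalue_of_hasEigenvector
      ⟨Module.End.mem_eigenspace_iff.mpr (by rw [hAx, zero_smul]), hx0⟩
  have hAne : Jacobi R x ≠ 0 := by
    intro h
    exact hr (by rw [h, LinearMap.range_zero, finrank_bot])
  have hTop : (⨆ μ, Module.End.eigenspace (Jacobi R x) μ) = ⊤ :=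
    Submodule.orthogonal_eq_bot_iff.mp hsymm.orthogonalComplement_iSup_eigenspaces_eq_bot
  have hex : ∃ l : ℝ, l ≠ 0 ∧ Module.End.HasEigenvalue (Jacobi R x) l := by
    by_contra hcon
    push_neg at hcon
    apply hAne
    ext v
    rw [LinearMap.zero_apply]
    have hv : v ∈ ⨆ μ, Module.End.eigenspace (Jacobi R x) μ := hTop ▸ Submodule.mem_top
    refine Submodule.iSup_induction _ (motive := fun w => Jacobi R x w = 0) hv ?_ (map_zero _) ?_
    · intro μ w hw
      rw [Module.End.mem_eigenspace_iff] at hw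
      rcases eq_or_ne μ 0 with h | h
      · rw [hw, h, zero_smul]
      · have hb : Module.End.eigenspace (Jacobi R x) μ = ⊥ := by
          by_contra hb
          exact hcon μ h (Module.End.hasEigenvalue_iff.mpr hb)
        have hw0 : w = 0 := by
          have : w ∈ Module.End.eigenspace (Jacobi R x) μ :=
            Module.End.mem_eigenspace_iff.mpr hw
          rwa [hb, Submodule.mem_bot] at this
        rw [hw0, map_zero]
    · intro a b ha hb; rw [map_add, ha, hb, add_zero]
  obtain ⟨lam, hlam0, hlamev⟩ := hex
  have unit_eig : ∀ μ : ℝ, Module.End.HasEigenvalue (Jacobi R x) μ →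
      ∃ e : V, ‖e‖ = 1 ∧ Jacobi R x e = μ • e := by
    intro μ hμ
    obtain ⟨v, hv⟩ := hμ.exists_hasEigenvector
    obtain ⟨hmem, hne0⟩ := Module.End.hasEigenvector_iff.mp hv
    refine ⟨‖v‖⁻¹ • v, ?_, ?_⟩
    · rw [norm_smul, norm_inv, norm_norm, inv_mul_cancel₀ (norm_ne_zero_iff.mpr hne0)]
    · rw [map_smul, Module.End.mem_eigenspace_iff.mp hmem, smul_comm]
  obtain ⟨e, he1, hAe⟩ := unit_eig lam hlamev
  have huniq : ∀ μ : ℝ, Module.End.HasEigenvalue (Jacobi R x) μ → μ = 0 ∨ μ = lam := by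
    intro μ hμ
    rcases eq_or_ne μ 0 with h | h
    · exact Or.inl h
    · obtain ⟨f, hf1, hAf⟩ := unit_eig μ hμ
      exact Or.inr (nonzero_eig_unique hR hT hx hf1 he1 hAf hAe h hlam0)
  have hsq : ∀ v : V, Jacobi R x (Jacobi R x v) = lam • (Jacobi R x v) := by
    intro v
    have hv : v ∈ ⨆ μ, Module.End.eigenspace (Jacobi R x) μ := hTop ▸ Submodule.mem_top
    refine Submodule.iSup_induction _
      (motive := fun w => Jacobi R x (Jacobi R x w) = lam • (Jacobi R x w)) hv ?_ ?_ ?_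
    · intro μ w hw
      rw [Module.End.mem_eigenspace_iff] at hw
      rcases eq_or_ne w 0 with rfl | hw0
      · simp
      · have hμev : Module.End.HasEigenvalue (Jacobi R x) μ :=
          Module.End.hasEigenvalue_of_hasEigenvector
            ⟨Module.End.mem_eigenspace_iff.mpr hw, hw0⟩
        rcases huniq μ hμev with h | h
        · simp [hw, h]
        · rw [hw, map_smul, hw, smul_smul, smul_smul, h]
    · simp
    · intro a b ha hb; rw [map_add, map_add, ha, hb, smul_add]
  refine ⟨lam, hlam0, ?_, h0ev, hlamev, huniq⟩
  rintro v ⟨w, rfl⟩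
  exact hsq w
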